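/- In a level-aware conflict graph, the set of UIPs for the conflict decision level is totally ordered by reachability: for any two distinct UIPs u and v, either u is reachable from v or v is reachable from u. -/

import Mathlib

inductive Lit (V : Type) where
  | pos : V → Lit V
  | neg : V → Lit V
deriving DecidableEq

def Lit.compl {V : Type} : Lit V → Lit V
  | .pos v => .neg v
  | .neg v => .pos v

/-- `l` is a (directed) path from `a` to `b` along the edge relation `E`. -/
def IsPath {α : Type} (E : α → α → Prop) (l : List α) (a b : α) : Prop :=
  l.Chain' E ∧ l.head? = some a ∧ l.getLast? = some b

/-- A UIP for the conflict level: a node through which every path from the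
decision literal `σd` to a conflicting literal passes. -/
def IsUIP {V : Type} (nodes : Finset (Lit V)) (E : Lit V → Lit V → Prop)
    (σ σd u : Lit V) : Prop :=
  u ∈ nodes ∧
  ∀ (l : List (Lit V)) (c : Lit V), (c = σ ∨ c = Lit.compl σ) →
    IsPath E l σd c → u ∈ l

/-! Fix one path from `σd` to `σ`. Every UIP lies on it, and along a path each node reaches
every later node, so of two distinct UIPs the earlier one reaches the later one. -/

theorem List.Pairwise.rel_or_rel_of_mem {α : Type*} {R : α → α → Prop} {l : List α}
    (hl : l.Pairwise R) {a b : α} (ha : a ∈ l) (hb : b ∈ l) (hab : a ≠ b) :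
    R a b ∨ R b a := by
  induction hl with
  | nil => simp at ha
  | @cons x t hx _ ih =>
    rcases List.mem_cons.1 ha with rfl | ha' <;> rcases List.mem_cons.1 hb with rfl | hb'
    · exact absurd rfl hab
    · exact .inl (hx b hb')
    · exact .inr (hx a ha')
    · exact ih ha' hb'

theorem List.IsChain.transGen_or_transGen_of_mem {α : Type*} {E : α → α → Prop} {l : List α}
    (hl : l.IsChain E) {a b : α} (ha : a ∈ l) (hb : b ∈ l) (hab : a ≠ b) :
    Relation.TransGen E a b ∨ Relation.TransGen E b a :=
  (hl.imp fun _ _ => .single).pairwise.rel_or_rel_of_mem ha hb hab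

theorem exists_isPath_of_reflTransGen {α : Type} {E : α → α → Prop} {a b : α}
    (h : Relation.ReflTransGen E a b) : ∃ l, IsPath E l a b := by
  obtain ⟨l, hl, hlast⟩ := List.exists_isChain_cons_of_relationReflTransGen h
  exact ⟨a :: l, hl, rfl, by rw [List.getLast?_eq_some_getLast (List.cons_ne_nil a l), hlast]⟩

theorem transGen_or_transGen_of_forall_isPath_mem {α : Type} {E : α → α → Prop}
    {a b u v : α} (hab : Relation.ReflTransGen E a b)
    (hu : ∀ l, IsPath E l a b → u ∈ l) (hv : ∀ l, IsPath E l a b → v ∈ l) (huv : u ≠ v) :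
    Relation.TransGen E u v ∨ Relation.TransGen E v u := by
  obtain ⟨l, hl⟩ := exists_isPath_of_reflTransGen hab
  exact hl.1.transGen_or_transGen_of_mem (hu l hl) (hv l hl) huv

theorem stmt13_general {V : Type}
    (nodes : Finset (Lit V)) (E : Lit V → Lit V → Prop)
    (σ σd : Lit V)
    -- both conflicting literals are reachable from the decision literal
    (hreach : Relation.ReflTransGen E σd σ ∧ Relation.ReflTransGen E σd σ.compl) :
    ∀ u v : Lit V, IsUIP nodes E σ σd u → IsUIP nodes E σ σd v → u ≠ v →
      Relation.TransGen E u v ∨ Relation.TransGen E v u :=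
  fun _ _ hu hv huv =>
    transGen_or_transGen_of_forall_isPath_mem hreach.1
      (fun l hl => hu.2 l σ (.inl rfl) hl) (fun l hl => hv.2 l σ (.inl rfl) hl) huv

/-- in a finite level-aware conflict graph, the UIPs of the
conflict decision level are totally ordered by reachability: for distinct
UIPs `u` and `v`, one is reachable from the other.
 -/
theorem stmt13 {V : Type} [DecidableEq V]
    (nodes : Finset (Lit V)) (E : Lit V → Lit V → Prop) (dl : Lit V → ℕ)
    (σ σd : Lit V)
    (hσ : σ ∈ nodes) (hσc : σ.compl ∈ nodes) (hσd : σd ∈ nodes)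
    (hE : ∀ a b, E a b → a ∈ nodes ∧ b ∈ nodes)
    (hacyc : ∀ a, ¬ Relation.TransGen E a a)
    (hdlσd : dl σd = dl σ) (hdlσc : dl σ.compl = dl σ)
    (hσne : σ ≠ σd) (hσcne : σ.compl ≠ σd)
    (hdec : ∀ a, ¬ E a σd)
    -- level-awareness
    (hla : (∃ p, E p σ ∧ dl p = dl σ) ∧ (∃ p, E p σ.compl ∧ dl p = dl σ))
    -- both conflicting literals are reachable from the decision literal
    (hreach : Relation.ReflTransGen E σd σ ∧ Relation.ReflTransGen E σd σ.compl) :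
    ∀ u v : Lit V, IsUIP nodes E σ σd u → IsUIP nodes E σ σd v → u ≠ v →
      Relation.TransGen E u v ∨ Relation.TransGen E v u :=
  stmt13_general nodes E σ σd hreach
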